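/- arXiv:2101.08520 — 3 statements merged into one kernel-verified Lean document; each statement's English description precedes it below -/
import Mathlib

section
/- Suppose (U, V) is a C² solution on ℝ of the Keller–Segel traveling-wave system with speed s, satisfying the asymptotic boundary conditions (with u₋ ≠ u₊), and with U′(z) → 0 and V′(z) → 0 as z → ±∞. Then for every ε' > 0 there exists M > 0 such that for every a > M there exists η > 0 with the following property: for every sⁿ ∈ ℝ and all C² functions Uⁿ, Vⁿ : ℝ → ℝ satisfying 2u₊ − u₋ ≤ Uⁿ ≤ 2u₋ − u₊ and 2v₋ − v₊ ≤ Vⁿ ≤ 2v₊ − v₋, if Loss_Total(Uⁿ, Vⁿ, sⁿ; a) < η then |sⁿ − s| < ε'. -/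
open Filter Topology

/-- The total loss `Loss_GE + Loss_Limit + Loss_BC + Loss_Trans` for the Keller--Segel
traveling-wave problem, for approximations `Un, Vn` with speed parameter `sn` on the
truncated domain `[-a, a]`.  Here `um, vm` denote `u₋, v₋` and `up, vp` denote
`u₊, v₊`. -/
noncomputable def lossTotalKS (D χ ε um up vm vp : ℝ)
    (Un Vn : ℝ → ℝ) (sn a : ℝ) : ℝ :=
  -- Loss_GE
  (∫ z in (-a)..a, (sn * deriv Un z + χ * deriv (fun y => Un y * Vn y) z
      + D * deriv (deriv Un) z)^2)
  + (∫ z in (-a)..a, (sn * deriv Vn z - deriv (fun y => ε * (Vn y)^2 - Un y) z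
      + ε * deriv (deriv Vn) z)^2)
  -- Loss_Limit
  + ((Un (-a) - um)^2 + (Un a - up)^2 + (Vn (-a) - vm)^2 + (Vn a - vp)^2)
  -- Loss_BC
  + ((deriv Un (-a))^2 + (deriv Un a)^2 + (deriv Vn (-a))^2 + (deriv Vn a)^2)
  -- Loss_Trans
  + (Un 0 - (um + up)/2)^2

/-- If `f` is `C²` then `deriv f` is differentiable. -/
lemma KSaux_deriv_diff (f : ℝ → ℝ) (hf : ContDiff ℝ 2 f) :
    Differentiable ℝ (deriv f) := by
  have h' : ContDiff ℝ ((1:ℕ)+1) f := by exact_mod_cast hf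
  exact (contDiff_succ_iff_deriv.mp h').2.2.differentiable (by norm_num)

/-- If `f` is `C²` then `deriv (deriv f)` is continuous. -/
lemma KSaux_deriv2_cont (f : ℝ → ℝ) (hf : ContDiff ℝ 2 f) :
    Continuous (deriv (deriv f)) := by
  have h' : ContDiff ℝ ((1:ℕ)+1) f := by exact_mod_cast hf
  exact (contDiff_succ_iff_deriv.mp h').2.2.continuous_deriv le_rfl

/-- Derivative of the combination appearing in the Keller-Segel first equation. -/
lemma KSaux_hasDerivAt (c1 c2 c3 : ℝ) (f g : ℝ → ℝ)
    (hf : ContDiff ℝ 2 f) (hg : ContDiff ℝ 2 g) (z : ℝ) :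
    HasDerivAt (fun y => c1 * f y + c2 * (f y * g y) + c3 * deriv f y)
      (c1 * deriv f z + c2 * deriv (fun y => f y * g y) z + c3 * deriv (deriv f) z) z := by
  have hfd : Differentiable ℝ f := hf.differentiable (by norm_num)
  have hgd : Differentiable ℝ g := hg.differentiable (by norm_num)
  have h1 : HasDerivAt f (deriv f z) z := (hfd z).hasDerivAt
  have h2 : HasDerivAt (fun y => f y * g y) (deriv (fun y => f y * g y) z) z :=
    (((hfd z).mul (hgd z))).hasDerivAt
  have h3 : HasDerivAt (deriv f) (deriv (deriv f) z) z :=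
    ((KSaux_deriv_diff f hf) z).hasDerivAt
  exact ((h1.const_mul c1).add (h2.const_mul c2)).add (h3.const_mul c3)

/-- Continuity of the integrand combination. -/
lemma KSaux_cont (c1 c2 c3 : ℝ) (f g : ℝ → ℝ)
    (hf : ContDiff ℝ 2 f) (hg : ContDiff ℝ 2 g) :
    Continuous (fun z => c1 * deriv f z + c2 * deriv (fun y => f y * g y) z
      + c3 * deriv (deriv f) z) := by
  have h1 : Continuous (deriv f) := hf.continuous_deriv one_le_two
  have h2 : Continuous (deriv (fun y => f y * g y)) :=
    (hf.mul hg).continuous_deriv one_le_two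
  have h3 : Continuous (deriv (deriv f)) := KSaux_deriv2_cont f hf
  exact ((continuous_const.mul h1).add (continuous_const.mul h2)).add
    (continuous_const.mul h3)

lemma KSaux_abs_le_quad (y δ : ℝ) (hδ : 0 < δ) : |y| ≤ δ/2 + y^2/(2*δ) := by
  have h2δ : (0:ℝ) < 2 * δ := by positivity
  have h1 : δ/2 + y^2/(2*δ) = (δ^2 + y^2)/(2*δ) := by field_simp
  rw [h1, le_div_iff₀ h2δ]
  nlinarith [sq_nonneg (|y| - δ), sq_abs y, abs_nonneg y]

lemma KSaux_mulfrac (K x : ℝ) (hK : K ≠ 0) : K * (x / (8 * K)) = x / 8 := by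
  field_simp

lemma KSaux_divfrac (d w : ℝ) (hd : d ≠ 0) : (d * w) / (2 * d) = w / 2 := by
  field_simp

lemma KSaux_h38 (x y : ℝ) (hx : 0 < x) (hy : 0 < y) : 3 * (x * y / 8) < x * (y / 2) := by
  nlinarith [mul_pos hx hy]

lemma KSaux_sqrt_lt {x η : ℝ} (hx : x^2 < η) : |x| < Real.sqrt η := by
  rw [← Real.sqrt_sq_eq_abs]; exact Real.sqrt_lt_sqrt (sq_nonneg x) hx

set_option maxHeartbeats 1000000 in
/-- convergence of the speed parameter.  Given an exact Keller--Segel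
traveling-wave solution `(U, V)` with speed `s`, for every `ε' > 0` there is `M > 0`
such that for every truncation `a > M` there is a loss threshold `η > 0`: any bounded
C² approximations `(Uⁿ, Vⁿ)` with speed parameter `sⁿ` whose total loss is below `η`
satisfy `|sⁿ − s| < ε'`. -/
theorem keller_segel_speed_convergence
    (D χ ε s um up vm vp : ℝ) (hD : 0 < D) (hχ : 0 < χ) (hε : 0 ≤ ε)
    (hu : um > up) (hu' : up ≥ 0) (hv : vm < vp) (hv' : vp ≤ 0)
    (U V : ℝ → ℝ) (hU : ContDiff ℝ 2 U) (hV : ContDiff ℝ 2 V)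
    (hODE1 : ∀ z, s * deriv U z + χ * deriv (fun y => U y * V y) z
      + D * deriv (deriv U) z = 0)
    (hODE2 : ∀ z, s * deriv V z - deriv (fun y => ε * (V y)^2 - U y) z
      + ε * deriv (deriv V) z = 0)
    (hUbot : Tendsto U atBot (𝓝 um)) (hUtop : Tendsto U atTop (𝓝 up))
    (hVbot : Tendsto V atBot (𝓝 vm)) (hVtop : Tendsto V atTop (𝓝 vp))
    (hU'bot : Tendsto (deriv U) atBot (𝓝 0)) (hU'top : Tendsto (deriv U) atTop (𝓝 0))
    (hV'bot : Tendsto (deriv V) atBot (𝓝 0)) (hV'top : Tendsto (deriv V) atTop (𝓝 0)) :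
    ∀ ε' > 0, ∃ M > 0, ∀ a > M, ∃ η > 0,
      ∀ (sn : ℝ) (Un Vn : ℝ → ℝ), ContDiff ℝ 2 Un → ContDiff ℝ 2 Vn →
        (∀ z, 2 * up - um ≤ Un z ∧ Un z ≤ 2 * um - up) →
        (∀ z, 2 * vm - vp ≤ Vn z ∧ Vn z ≤ 2 * vp - vm) →
        lossTotalKS D χ ε um up vm vp Un Vn sn a < η →
        |sn - s| < ε' := by
  -- Step 1: the exact solution satisfies the Rankine-Hugoniot type relation
  -- s*um + χ*um*vm = s*up + χ*up*vp.
  have hGd : ∀ z, HasDerivAt (fun y => s * U y + χ * (U y * V y) + D * deriv U y)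
      (s * deriv U z + χ * deriv (fun y => U y * V y) z + D * deriv (deriv U) z) z :=
    KSaux_hasDerivAt s χ D U V hU hV
  set G : ℝ → ℝ := fun y => s * U y + χ * (U y * V y) + D * deriv U y with hGdef
  have hGdiff : Differentiable ℝ G := fun z => (hGd z).differentiableAt
  have hGzero : ∀ z, deriv G z = 0 := fun z => by
    rw [(hGd z).deriv]; exact hODE1 z
  have hGconst : ∀ x y, G x = G y := is_const_of_deriv_eq_zero hGdiff hGzero
  have hGbot : Tendsto G atBot (𝓝 (s * um + χ * (um * vm) + D * 0)) :=
    ((hUbot.const_mul s).add ((hUbot.mul hVbot).const_mul χ)).add (hU'bot.const_mul D)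
  have hGtop : Tendsto G atTop (𝓝 (s * up + χ * (up * vp) + D * 0)) :=
    ((hUtop.const_mul s).add ((hUtop.mul hVtop).const_mul χ)).add (hU'top.const_mul D)
  have hGbot' : Tendsto G atBot (𝓝 (G 0)) :=
    tendsto_const_nhds.congr (fun x => hGconst 0 x)
  have hGtop' : Tendsto G atTop (𝓝 (G 0)) :=
    tendsto_const_nhds.congr (fun x => hGconst 0 x)
  have hKey : s * um + χ * (um * vm) = s * up + χ * (up * vp) := by
    have h1 := tendsto_nhds_unique hGbot hGbot'
    have h2 := tendsto_nhds_unique hGtop hGtop'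
    linear_combination h1 - h2
  -- Step 2: the quantitative argument.
  intro ε' hε'
  refine ⟨1, one_pos, ?_⟩
  intro a ha
  have ha0 : (0:ℝ) < a := lt_trans one_pos ha
  have haa : -a ≤ a := by linarith
  set c : ℝ := um - up with hcdef
  have hc : 0 < c := by simp [hcdef]; linarith
  set B : ℝ := 2 * (|vm| + |vp|) with hBdef
  have hB : 0 ≤ B := by positivity
  set K0 : ℝ := χ * (2 * B + |up| + |um|) + 2 * D + 2 * |s| + 1 with hK0def
  have hK0 : 0 < K0 := by positivity
  set δ : ℝ := ε' * c / (8 * a) with hδdef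
  have hδ : 0 < δ := by positivity
  set η : ℝ := min (min ((ε' * c / (8 * K0))^2) ((c / 4)^2)) (δ * (ε' * c / 4)) with hηdef
  have hη : 0 < η := lt_min (lt_min (by positivity) (by positivity)) (by positivity)
  refine ⟨η, hη, ?_⟩
  intro sn Un Vn hUn hVn hUnb hVnb hloss
  set r : ℝ := Real.sqrt η with hrdef
  have hr0 : 0 ≤ r := Real.sqrt_nonneg η
  have hr1 : r ≤ ε' * c / (8 * K0) := by
    have : η ≤ (ε' * c / (8 * K0))^2 :=
      le_trans (min_le_left _ _) (min_le_left _ _)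
    calc r ≤ Real.sqrt ((ε' * c / (8 * K0))^2) := Real.sqrt_le_sqrt this
    _ = ε' * c / (8 * K0) := Real.sqrt_sq (by positivity)
  have hr2 : r ≤ c / 4 := by
    have : η ≤ (c / 4)^2 := le_trans (min_le_left _ _) (min_le_right _ _)
    calc r ≤ Real.sqrt ((c / 4)^2) := Real.sqrt_le_sqrt this
    _ = c / 4 := Real.sqrt_sq (by positivity)
  have hηδ : η ≤ δ * (ε' * c / 4) := min_le_right _ _
  -- extract the individual loss bounds
  have hI2nn : 0 ≤ ∫ z in (-a)..a, (sn * deriv Vn z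
      - deriv (fun y => ε * (Vn y)^2 - Un y) z + ε * deriv (deriv Vn) z)^2 :=
    intervalIntegral.integral_nonneg haa (fun u _ => sq_nonneg _)
  have hI1nn : 0 ≤ ∫ z in (-a)..a, (sn * deriv Un z
      + χ * deriv (fun y => Un y * Vn y) z + D * deriv (deriv Un) z)^2 :=
    intervalIntegral.integral_nonneg haa (fun u _ => sq_nonneg _)
  unfold lossTotalKS at hloss
  have sq1 := sq_nonneg (Un (-a) - um)
  have sq2 := sq_nonneg (Un a - up)
  have sq3 := sq_nonneg (Vn (-a) - vm)
  have sq4 := sq_nonneg (Vn a - vp)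
  have sq5 := sq_nonneg (deriv Un (-a))
  have sq6 := sq_nonneg (deriv Un a)
  have sq7 := sq_nonneg (deriv Vn (-a))
  have sq8 := sq_nonneg (deriv Vn a)
  have sq9 := sq_nonneg (Un 0 - (um + up)/2)
  have hI1 : (∫ z in (-a)..a, (sn * deriv Un z
      + χ * deriv (fun y => Un y * Vn y) z + D * deriv (deriv Un) z)^2) < η := by
    linarith
  have e1 : |Un a - up| < r := KSaux_sqrt_lt (by linarith)
  have e2 : |Un (-a) - um| < r := KSaux_sqrt_lt (by linarith)
  have e3 : |Vn a - vp| < r := KSaux_sqrt_lt (by linarith)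
  have e4 : |Vn (-a) - vm| < r := KSaux_sqrt_lt (by linarith)
  have e5 : |deriv Un a| < r := KSaux_sqrt_lt (by linarith)
  have e6 : |deriv Un (-a)| < r := KSaux_sqrt_lt (by linarith)
  -- the FTC identity for the approximate solution
  have hHd : ∀ z, HasDerivAt (fun y => sn * Un y + χ * (Un y * Vn y) + D * deriv Un y)
      (sn * deriv Un z + χ * deriv (fun y => Un y * Vn y) z + D * deriv (deriv Un) z) z :=
    KSaux_hasDerivAt sn χ D Un Vn hUn hVn
  have hfc : Continuous (fun z => sn * deriv Un z
      + χ * deriv (fun y => Un y * Vn y) z + D * deriv (deriv Un) z) :=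
    KSaux_cont sn χ D Un Vn hUn hVn
  have hFTC : (∫ z in (-a)..a, (sn * deriv Un z
      + χ * deriv (fun y => Un y * Vn y) z + D * deriv (deriv Un) z))
      = (sn * Un a + χ * (Un a * Vn a) + D * deriv Un a)
        - (sn * Un (-a) + χ * (Un (-a) * Vn (-a)) + D * deriv Un (-a)) := by
    have hdH : deriv (fun y => sn * Un y + χ * (Un y * Vn y) + D * deriv Un y)
        = fun z => sn * deriv Un z + χ * deriv (fun y => Un y * Vn y) z
          + D * deriv (deriv Un) z := funext fun z => (hHd z).deriv
    have := intervalIntegral.integral_deriv_eq_sub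
      (f := fun y => sn * Un y + χ * (Un y * Vn y) + D * deriv Un y)
      (a := -a) (b := a)
      (fun x _ => (hHd x).differentiableAt)
      (by rw [hdH]; exact hfc.intervalIntegrable _ _)
    rw [hdH] at this
    exact this
  -- bound the integral via the pointwise inequality |f| ≤ δ/2 + f²/(2δ)
  have h2δ : (0:ℝ) < 2 * δ := by positivity
  have hintf2 : IntervalIntegrable (fun z => (sn * deriv Un z
      + χ * deriv (fun y => Un y * Vn y) z + D * deriv (deriv Un) z)^2)
      MeasureTheory.volume (-a) a := (hfc.pow 2).intervalIntegrable _ _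
  have hIb : |∫ z in (-a)..a, (sn * deriv Un z
      + χ * deriv (fun y => Un y * Vn y) z + D * deriv (deriv Un) z)|
      ≤ a * δ + η / (2 * δ) := by
    set f : ℝ → ℝ := fun z => sn * deriv Un z
      + χ * deriv (fun y => Un y * Vn y) z + D * deriv (deriv Un) z with hfdef
    have habs : |∫ z in (-a)..a, f z| ≤ ∫ z in (-a)..a, |f z| :=
      intervalIntegral.abs_integral_le_integral_abs haa
    have hmono : (∫ z in (-a)..a, |f z|)
        ≤ ∫ z in (-a)..a, (δ/2 + (f z)^2/(2*δ)) := by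
      exact intervalIntegral.integral_mono_on haa (hfc.abs.intervalIntegrable _ _)
        (intervalIntegrable_const.add (hintf2.div_const _))
        (fun x _ => KSaux_abs_le_quad (f x) δ hδ)
    have hsplit : (∫ z in (-a)..a, (δ/2 + (f z)^2/(2*δ)))
        = (a - (-a)) * (δ/2) + (∫ z in (-a)..a, (f z)^2)/(2*δ) := by
      rw [intervalIntegral.integral_add intervalIntegrable_const (hintf2.div_const _),
        intervalIntegral.integral_const, intervalIntegral.integral_div]
      simp [smul_eq_mul]
      rfl
    have hlast : (∫ z in (-a)..a, (f z)^2)/(2*δ) ≤ η/(2*δ) :=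
      (div_le_div_iff_of_pos_right h2δ).mpr hI1.le
    calc |∫ z in (-a)..a, f z| ≤ ∫ z in (-a)..a, |f z| := habs
    _ ≤ ∫ z in (-a)..a, (δ/2 + (f z)^2/(2*δ)) := hmono
    _ = (a - (-a)) * (δ/2) + (∫ z in (-a)..a, (f z)^2)/(2*δ) := hsplit
    _ ≤ a * δ + η/(2*δ) := by linarith
  -- bounds on Vn at the endpoints
  have hBv : ∀ z, |Vn z| ≤ B := by
    intro z
    obtain ⟨hl, hr'⟩ := hVnb z
    rw [abs_le]
    constructor
    · have h1 : -|vm| ≤ vm := neg_abs_le vm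
      have h2 : -|vp| ≤ vp := neg_abs_le vp
      have h3 : vp ≤ |vp| := le_abs_self vp
      simp only [hBdef]; linarith
    · have h1 : vp ≤ |vp| := le_abs_self vp
      have h2 : -|vm| ≤ vm := neg_abs_le vm
      simp only [hBdef]; linarith
  -- product bounds
  have hp1 : |Un a * Vn a - up * vp| ≤ (B + |up|) * r := by
    have hexp : Un a * Vn a - up * vp = (Un a - up) * Vn a + up * (Vn a - vp) := by ring
    rw [hexp]
    have h1 : |(Un a - up) * Vn a| ≤ r * B := by
      rw [abs_mul]; exact mul_le_mul e1.le (hBv a) (abs_nonneg _) hr0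
    have h2 : |up * (Vn a - vp)| ≤ |up| * r := by
      rw [abs_mul]; exact mul_le_mul_of_nonneg_left e3.le (abs_nonneg up)
    calc |(Un a - up) * Vn a + up * (Vn a - vp)|
        ≤ |(Un a - up) * Vn a| + |up * (Vn a - vp)| := abs_add_le _ _
    _ ≤ (B + |up|) * r := by linarith [h1, h2]; 
  have hp0 : |Un (-a) * Vn (-a) - um * vm| ≤ (B + |um|) * r := by
    have hexp : Un (-a) * Vn (-a) - um * vm
        = (Un (-a) - um) * Vn (-a) + um * (Vn (-a) - vm) := by ring
    rw [hexp]
    have h1 : |(Un (-a) - um) * Vn (-a)| ≤ r * B := by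
      rw [abs_mul]; exact mul_le_mul e2.le (hBv (-a)) (abs_nonneg _) hr0
    have h2 : |um * (Vn (-a) - vm)| ≤ |um| * r := by
      rw [abs_mul]; exact mul_le_mul_of_nonneg_left e4.le (abs_nonneg um)
    calc |(Un (-a) - um) * Vn (-a) + um * (Vn (-a) - vm)|
        ≤ |(Un (-a) - um) * Vn (-a)| + |um * (Vn (-a) - vm)| := abs_add_le _ _
    _ ≤ (B + |um|) * r := by linarith [h1, h2]
  -- main identity
  have hE : (sn - s) * (Un a - Un (-a))
      = (∫ z in (-a)..a, (sn * deriv Un z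
          + χ * deriv (fun y => Un y * Vn y) z + D * deriv (deriv Un) z))
        - χ * ((Un a * Vn a - up * vp) - (Un (-a) * Vn (-a) - um * vm))
        - D * (deriv Un a - deriv Un (-a))
        - s * ((Un a - up) - (Un (-a) - um)) := by
    linear_combination hKey - hFTC
  -- bound each term
  have t1 : |χ * ((Un a * Vn a - up * vp) - (Un (-a) * Vn (-a) - um * vm))|
      ≤ χ * ((B + |up|) * r + (B + |um|) * r) := by
    rw [abs_mul, abs_of_pos hχ]
    refine mul_le_mul_of_nonneg_left ?_ hχ.le
    calc |(Un a * Vn a - up * vp) - (Un (-a) * Vn (-a) - um * vm)|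
        ≤ |Un a * Vn a - up * vp| + |Un (-a) * Vn (-a) - um * vm| := abs_sub _ _
    _ ≤ (B + |up|) * r + (B + |um|) * r := add_le_add hp1 hp0
  have t2 : |D * (deriv Un a - deriv Un (-a))| ≤ D * (r + r) := by
    rw [abs_mul, abs_of_pos hD]
    refine mul_le_mul_of_nonneg_left ?_ hD.le
    calc |deriv Un a - deriv Un (-a)| ≤ |deriv Un a| + |deriv Un (-a)| := abs_sub _ _
    _ ≤ r + r := add_le_add e5.le e6.le
  have t3 : |s * ((Un a - up) - (Un (-a) - um))| ≤ |s| * (r + r) := by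
    rw [abs_mul]
    refine mul_le_mul_of_nonneg_left ?_ (abs_nonneg s)
    calc |(Un a - up) - (Un (-a) - um)| ≤ |Un a - up| + |Un (-a) - um| := abs_sub _ _
    _ ≤ r + r := add_le_add e1.le e2.le
  have hEb : |(sn - s) * (Un a - Un (-a))| ≤ a * δ + η / (2 * δ) + K0 * r := by
    rw [hE]
    have tri : ∀ w x y z : ℝ, |w - x - y - z| ≤ |w| + |x| + |y| + |z| := by
      intro w x y z
      calc |w - x - y - z| ≤ |w - x - y| + |z| := abs_sub _ _
      _ ≤ |w - x| + |y| + |z| := by linarith [abs_sub (w - x) y]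
      _ ≤ |w| + |x| + |y| + |z| := by linarith [abs_sub w x]
    refine (tri _ _ _ _).trans ?_
    have hcoef : (χ * (2 * B + |up| + |um|) + 2 * D + 2 * |s|) * r ≤ K0 * r := by
      refine mul_le_mul_of_nonneg_right ?_ hr0
      simp only [hK0def]; linarith
    have hring : χ * ((B + |up|) * r + (B + |um|) * r) + D * (r + r) + |s| * (r + r)
        = (χ * (2 * B + |up| + |um|) + 2 * D + 2 * |s|) * r := by ring
    linarith [hIb, t1, t2, t3, hcoef, hring]
  -- lower bound on the jump
  have hA : c / 2 ≤ |Un a - Un (-a)| := by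
    have htri : c ≤ |Un a - Un (-a)| + |(Un a - up) - (Un (-a) - um)| := by
      have h1 : |(Un a - Un (-a)) - ((Un a - up) - (Un (-a) - um))|
          ≤ |Un a - Un (-a)| + |(Un a - up) - (Un (-a) - um)| := abs_sub _ _
      have h2 : (Un a - Un (-a)) - ((Un a - up) - (Un (-a) - um)) = -(c) := by
        simp only [hcdef]; ring
      rw [h2, abs_neg, abs_of_pos hc] at h1
      exact h1
    have h3 : |(Un a - up) - (Un (-a) - um)| ≤ r + r := by
      calc |(Un a - up) - (Un (-a) - um)| ≤ |Un a - up| + |Un (-a) - um| := abs_sub _ _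
      _ ≤ r + r := add_le_add e1.le e2.le
    linarith
  -- final bounds
  have haδ : a * δ = ε' * c * 4 / 32 := by
    simp only [hδdef]
    rw [KSaux_mulfrac a (ε' * c) ha0.ne']
    ring
  have hηb : η / (2 * δ) ≤ ε' * c / 8 := by
    calc η / (2 * δ) ≤ (δ * (ε' * c / 4)) / (2 * δ) :=
      (div_le_div_iff_of_pos_right h2δ).mpr hηδ
    _ = (ε' * c / 4) / 2 := KSaux_divfrac δ (ε' * c / 4) hδ.ne'
    _ = ε' * c / 8 := by ring
  have hK0r : K0 * r ≤ ε' * c / 8 := by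
    calc K0 * r ≤ K0 * (ε' * c / (8 * K0)) := mul_le_mul_of_nonneg_left hr1 hK0.le
    _ = ε' * c / 8 := KSaux_mulfrac K0 (ε' * c) hK0.ne'
  have hfin : |sn - s| * (c / 2) ≤ 3 * (ε' * c / 8) := by
    calc |sn - s| * (c / 2) ≤ |sn - s| * |Un a - Un (-a)| :=
      mul_le_mul_of_nonneg_left hA (abs_nonneg _)
    _ = |(sn - s) * (Un a - Un (-a))| := (abs_mul _ _).symm
    _ ≤ a * δ + η / (2 * δ) + K0 * r := hEb
    _ ≤ 3 * (ε' * c / 8) := by linarith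
  have h38 : 3 * (ε' * c / 8) < ε' * (c / 2) := KSaux_h38 ε' c hε' hc
  exact lt_of_mul_lt_mul_right (lt_of_le_of_lt hfin h38) (by positivity)
end

section
/- Let D > 0, χ > 0, ε > 0 and let (U, V) be a C² solution on ℝ of the Keller–Segel traveling-wave system with speed s, satisfying u₊ ≤ U ≤ u₋ and v₋ ≤ V ≤ v₊ (where u₋ > u₊ ≥ 0 and v₋ < v₊ ≤ 0). Let a > 0, sⁿ ∈ ℝ, and let Uⁿ, Vⁿ : [−a, a] → ℝ be C² with 2u₊ − u₋ ≤ Uⁿ ≤ 2u₋ − u₊ and 2v₋ − v₊ ≤ Vⁿ ≤ 2v₊ − v₋, satisfying sⁿ Uⁿ′ + χ(Uⁿ Vⁿ)′ + D Uⁿ″ = f and sⁿ Vⁿ′ − (ε(Vⁿ)² − Uⁿ)′ + ε Vⁿ″ = g on [−a, a] for continuous functions f, g. Set E(x) = √((U − Uⁿ)²(x) + (V − Vⁿ)²(x)), and for x ∈ [−a, a] define ε₁(x) = |U′(−a) − Uⁿ′(−a)| + ((|s| + χ|v₋|)/D)·|U(−a) − Uⁿ(−a)| + ((3u₋ − u₊)/D)·|s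 − sⁿ| + (χ(2u₋ − u₊)/D)·|V(−a) − Vⁿ(−a)| + (1/D)∫_{−a}^{x}|f(z)|dz, ε₂(x) = |V′(−a) − Vⁿ′(−a)| + (|s|/ε + v₊ − 3v₋)·|V(−a) − Vⁿ(−a)| + (1/ε)·|U(−a) − Uⁿ(−a)| + ((v₊ − 3v₋)/ε)·|s − sⁿ| + (1/ε)∫_{−a}^{x}|g(z)|dz, and let K = sup over (u, v) ∈ [2u₊ − u₋, 2u₋ − u₊] × [2v₋ − v₊, 2v₊ − v₋] of √(((s + χv)/D)² + (χu/D)² + (1/ε)² + ((−s + 2εv)/ε)²). Then for every x ∈ [−a, a], E(x) ≤ (E(−a) + √(ε₁(x)² + ε₂(x)²)/K)·exp(K|x + a|) − √(ε₁(x)² + ε₂(x)²)/K. -/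
open Filter Topology

section KSAux

private noncomputable def ksE2 : (Fin 2 → ℝ) ≃L[ℝ] EuclideanSpace ℝ (Fin 2) :=
  (PiLp.continuousLinearEquiv 2 ℝ (fun _ : Fin 2 => ℝ)).symm

private theorem ksE2_norm (x y : ℝ) : ‖(ksE2 ![x, y])‖ = Real.sqrt (x^2 + y^2) := by
  rw [EuclideanSpace.norm_eq]
  simp [ksE2, Fin.sum_univ_two, Real.norm_eq_abs, sq_abs]

private theorem ksE2_hasDerivAt {p q : ℝ → ℝ} {p' q' : ℝ} {z : ℝ}
    (hp : HasDerivAt p p' z) (hq : HasDerivAt q q' z) :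
    HasDerivAt (fun t => ksE2 ![p t, q t]) (ksE2 ![p', q']) z := by
  have h : HasDerivAt (fun t => (![p t, q t] : Fin 2 → ℝ)) ![p', q'] z := by
    rw [hasDerivAt_pi]
    intro i; fin_cases i
    · simpa using hp
    · simpa using hq
  exact (ksE2.toContinuousLinearMap.hasFDerivAt.comp_hasDerivAt z h)

private theorem ks_deriv_diff {F : ℝ → ℝ} (hF : ContDiff ℝ 2 F) :
    Differentiable ℝ (deriv F) := by
  have h : ContDiff ℝ (1+1) F := by norm_num; exact hF
  exact (contDiff_succ_iff_deriv.1 h).2.2.differentiable (by norm_num)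

private theorem ks_sqrt_cs2 (a b x y : ℝ) :
    a*x + b*y ≤ Real.sqrt (a^2+b^2) * Real.sqrt (x^2+y^2) := by
  have h1 : a*x + b*y ≤ |a*x+b*y| := le_abs_self _
  have h2 : |a*x+b*y| = Real.sqrt ((a*x+b*y)^2) := (Real.sqrt_sq_eq_abs _).symm
  rw [← Real.sqrt_mul (by positivity)]
  refine h1.trans (h2.le.trans (Real.sqrt_le_sqrt ?_))
  nlinarith [sq_nonneg (a*y - b*x)]

private theorem ks_key_ineq (A11 A12 A21 A22 P Q R1 R2 K e1 e2 : ℝ)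
    (hK : Real.sqrt (A11^2+A12^2+A21^2+A22^2) ≤ K)
    (hR1 : |R1| ≤ e1) (hR2 : |R2| ≤ e2) :
    Real.sqrt ((A11*P+A12*Q+R1)^2 + (A21*P+A22*Q+R2)^2)
      ≤ K * Real.sqrt (P^2+Q^2) + Real.sqrt (e1^2+e2^2) := by
  set c1 := A11*P+A12*Q with hc1
  set c2 := A21*P+A22*Q with hc2
  have h1 : Real.sqrt (c1^2+c2^2)
      ≤ Real.sqrt (A11^2+A12^2+A21^2+A22^2) * Real.sqrt (P^2+Q^2) := by
    rw [← Real.sqrt_mul (by positivity)]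
    apply Real.sqrt_le_sqrt
    simp only [hc1, hc2]
    nlinarith [sq_nonneg (A11*Q-A12*P), sq_nonneg (A21*Q-A22*P)]
  have h2 : Real.sqrt (R1^2+R2^2) ≤ Real.sqrt (e1^2+e2^2) := by
    apply Real.sqrt_le_sqrt
    have b1 : R1^2 ≤ e1^2 := by rw [← sq_abs R1]; exact pow_le_pow_left₀ (abs_nonneg _) hR1 2
    have b2 : R2^2 ≤ e2^2 := by rw [← sq_abs R2]; exact pow_le_pow_left₀ (abs_nonneg _) hR2 2
    linarith
  have h3 : Real.sqrt ((c1+R1)^2+(c2+R2)^2)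
      ≤ Real.sqrt (c1^2+c2^2) + Real.sqrt (R1^2+R2^2) := by
    have hcross := ks_sqrt_cs2 c1 c2 R1 R2
    have hs1 : Real.sqrt (c1^2+c2^2) ^ 2 = c1^2+c2^2 := Real.sq_sqrt (by positivity)
    have hs2 : Real.sqrt (R1^2+R2^2) ^ 2 = R1^2+R2^2 := Real.sq_sqrt (by positivity)
    have h : (c1+R1)^2+(c2+R2)^2
        ≤ (Real.sqrt (c1^2+c2^2) + Real.sqrt (R1^2+R2^2))^2 := by nlinarith
    calc Real.sqrt ((c1+R1)^2+(c2+R2)^2)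
        ≤ Real.sqrt ((Real.sqrt (c1^2+c2^2) + Real.sqrt (R1^2+R2^2))^2) :=
          Real.sqrt_le_sqrt h
      _ = _ := Real.sqrt_sq (by positivity)
  calc Real.sqrt ((c1+R1)^2+(c2+R2)^2) ≤ _ := h3
    _ ≤ Real.sqrt (A11^2+A12^2+A21^2+A22^2) * Real.sqrt (P^2+Q^2)
        + Real.sqrt (e1^2+e2^2) := add_le_add h1 h2
    _ ≤ K * Real.sqrt (P^2+Q^2) + Real.sqrt (e1^2+e2^2) :=
        add_le_add_left (mul_le_mul_of_nonneg_right hK (Real.sqrt_nonneg _)) _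

private theorem ks_abs4 (a b c d : ℝ) : |a + b + c - d| ≤ |a| + |b| + |c| + |d| := by
  calc |a + b + c - d| ≤ |a + b + c| + |d| := abs_sub _ _
    _ ≤ (|a + b| + |c|) + |d| := by gcongr; exact abs_add_le _ _
    _ ≤ ((|a| + |b|) + |c|) + |d| := by gcongr; exact abs_add_le _ _

private theorem ks_abs5 (a b c d e : ℝ) :
    |a + b - c + d - e| ≤ |a| + |b| + |c| + |d| + |e| := by
  calc |a + b - c + d - e| ≤ |a + b - c + d| + |e| := abs_sub _ _
    _ ≤ (|a + b - c| + |d|) + |e| := by gcongr; exact abs_add_le _ _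
    _ ≤ ((|a + b| + |c|) + |d|) + |e| := by gcongr; exact abs_sub _ _
    _ ≤ (((|a| + |b|) + |c|) + |d|) + |e| := by gcongr; exact abs_add_le _ _

end KSAux

set_option maxHeartbeats 1000000 in
/-- quantitative error estimate between an exact Keller--Segel
traveling-wave solution `(U, V)` with speed `s` and an approximate solution
`(Uⁿ, Vⁿ)` with speed `sⁿ` solving the system up to residuals `f, g` on `[-a, a]`.
Here `um, vm` denote `u₋, v₋` and `up, vp` denote `u₊, v₊`. -/
theorem keller_segel_error_estimate
    (D χ ε s sn a um up vm vp : ℝ)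
    (hD : 0 < D) (hχ : 0 < χ) (hε : 0 < ε) (ha : 0 < a)
    (hu : um > up) (hu' : up ≥ 0) (hv : vm < vp) (hv' : vp ≤ 0)
    (U V : ℝ → ℝ) (hU : ContDiff ℝ 2 U) (hV : ContDiff ℝ 2 V)
    (hODE1 : ∀ z, s * deriv U z + χ * deriv (fun y => U y * V y) z
      + D * deriv (deriv U) z = 0)
    (hODE2 : ∀ z, s * deriv V z - deriv (fun y => ε * (V y)^2 - U y) z
      + ε * deriv (deriv V) z = 0)
    (hUbd : ∀ z, up ≤ U z ∧ U z ≤ um) (hVbd : ∀ z, vm ≤ V z ∧ V z ≤ vp)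
    (Un Vn : ℝ → ℝ) (hUn : ContDiff ℝ 2 Un) (hVn : ContDiff ℝ 2 Vn)
    (hUnbd : ∀ z ∈ Set.Icc (-a) a, 2 * up - um ≤ Un z ∧ Un z ≤ 2 * um - up)
    (hVnbd : ∀ z ∈ Set.Icc (-a) a, 2 * vm - vp ≤ Vn z ∧ Vn z ≤ 2 * vp - vm)
    (f g : ℝ → ℝ) (hf : ContinuousOn f (Set.Icc (-a) a))
    (hg : ContinuousOn g (Set.Icc (-a) a))
    (hRes1 : ∀ z ∈ Set.Icc (-a) a,
      sn * deriv Un z + χ * deriv (fun y => Un y * Vn y) z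
        + D * deriv (deriv Un) z = f z)
    (hRes2 : ∀ z ∈ Set.Icc (-a) a,
      sn * deriv Vn z - deriv (fun y => ε * (Vn y)^2 - Un y) z
        + ε * deriv (deriv Vn) z = g z)
    (E eps1 eps2 : ℝ → ℝ) (K : ℝ)
    (hE : ∀ x, E x = Real.sqrt ((U x - Un x)^2 + (V x - Vn x)^2))
    (heps1 : ∀ x, eps1 x
      = |deriv U (-a) - deriv Un (-a)|
        + ((|s| + χ * |vm|) / D) * |U (-a) - Un (-a)|
        + ((3 * um - up) / D) * |s - sn|
        + (χ * (2 * um - up) / D) * |V (-a) - Vn (-a)|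
        + (1 / D) * ∫ z in (-a)..x, |f z|)
    (heps2 : ∀ x, eps2 x
      = |deriv V (-a) - deriv Vn (-a)|
        + (|s| / ε + vp - 3 * vm) * |V (-a) - Vn (-a)|
        + (1 / ε) * |U (-a) - Un (-a)|
        + ((vp - 3 * vm) / ε) * |s - sn|
        + (1 / ε) * ∫ z in (-a)..x, |g z|)
    (hK : K = sSup ((fun p : ℝ × ℝ =>
        Real.sqrt (((s + χ * p.2) / D)^2 + ((χ * p.1) / D)^2 + (1 / ε)^2
          + ((-s + 2 * ε * p.2) / ε)^2)) ''
        (Set.Icc (2 * up - um) (2 * um - up) ×ˢ Set.Icc (2 * vm - vp) (2 * vp - vm)))) :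
    ∀ x ∈ Set.Icc (-a) a,
      E x ≤ (E (-a) + Real.sqrt ((eps1 x)^2 + (eps2 x)^2) / K) * Real.exp (K * |x + a|)
        - Real.sqrt ((eps1 x)^2 + (eps2 x)^2) / K := by
  -- basic differentiability facts
  have hUd : Differentiable ℝ U := hU.differentiable two_ne_zero
  have hVd : Differentiable ℝ V := hV.differentiable two_ne_zero
  have hUnd : Differentiable ℝ Un := hUn.differentiable two_ne_zero
  have hVnd : Differentiable ℝ Vn := hVn.differentiable two_ne_zero
  have hU'd := ks_deriv_diff hU
  have hV'd := ks_deriv_diff hV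
  have hUn'd := ks_deriv_diff hUn
  have hVn'd := ks_deriv_diff hVn
  have hvm0 : vm < 0 := lt_of_lt_of_le hv hv'
  -- exact conservation laws
  have hexU : ∀ z, s * U z + χ * (U z * V z) + D * deriv U z
      = s * U (-a) + χ * (U (-a) * V (-a)) + D * deriv U (-a) := by
    have hF : ∀ z, HasDerivAt (fun y => s * U y + χ * (U y * V y) + D * deriv U y)
        (s * deriv U z + χ * deriv (fun y => U y * V y) z + D * deriv (deriv U) z) z := by
      intro z
      exact (((hUd z).hasDerivAt.const_mul s).add
        (((hUd.mul hVd) z).hasDerivAt.const_mul χ)).add ((hU'd z).hasDerivAt.const_mul D)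
    intro z
    exact is_const_of_deriv_eq_zero (fun y => (hF y).differentiableAt)
      (fun y => by rw [(hF y).deriv]; exact hODE1 y) z (-a)
  have hexV : ∀ z, s * V z - (ε * (V z)^2 - U z) + ε * deriv V z
      = s * V (-a) - (ε * (V (-a))^2 - U (-a)) + ε * deriv V (-a) := by
    have hmid : Differentiable ℝ (fun y => ε * (V y)^2 - U y) :=
      ((hVd.pow 2).const_mul ε).sub hUd
    have hG : ∀ z, HasDerivAt (fun y => s * V y - (ε * (V y)^2 - U y) + ε * deriv V y)
        (s * deriv V z - deriv (fun y => ε * (V y)^2 - U y) z + ε * deriv (deriv V) z) z := by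
      intro z
      exact (((hVd z).hasDerivAt.const_mul s).sub
        (hmid z).hasDerivAt).add ((hV'd z).hasDerivAt.const_mul ε)
    intro z
    exact is_const_of_deriv_eq_zero (fun y => (hG y).differentiableAt)
      (fun y => by rw [(hG y).deriv]; exact hODE2 y) z (-a)
  -- fundamental theorem of calculus for the approximate system
  have hFTC1 : ∀ x ∈ Set.Icc (-a) a, (∫ t in (-a)..x, f t)
      = (sn * Un x + χ * (Un x * Vn x) + D * deriv Un x)
        - (sn * Un (-a) + χ * (Un (-a) * Vn (-a)) + D * deriv Un (-a)) := by
    intro x hx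
    have hsub : Set.uIcc (-a) x ⊆ Set.Icc (-a) a := by
      rw [Set.uIcc_of_le hx.1]; exact Set.Icc_subset_Icc le_rfl hx.2
    apply intervalIntegral.integral_eq_sub_of_hasDerivAt
    · intro z hz
      rw [← hRes1 z (hsub hz)]
      exact (((hUnd z).hasDerivAt.const_mul sn).add
        (((hUnd.mul hVnd) z).hasDerivAt.const_mul χ)).add ((hUn'd z).hasDerivAt.const_mul D)
    · exact (hf.mono hsub).intervalIntegrable
  have hFTC2 : ∀ x ∈ Set.Icc (-a) a, (∫ t in (-a)..x, g t)
      = (sn * Vn x - (ε * (Vn x)^2 - Un x) + ε * deriv Vn x)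
        - (sn * Vn (-a) - (ε * (Vn (-a))^2 - Un (-a)) + ε * deriv Vn (-a)) := by
    have hmid : Differentiable ℝ (fun y => ε * (Vn y)^2 - Un y) :=
      ((hVnd.pow 2).const_mul ε).sub hUnd
    intro x hx
    have hsub : Set.uIcc (-a) x ⊆ Set.Icc (-a) a := by
      rw [Set.uIcc_of_le hx.1]; exact Set.Icc_subset_Icc le_rfl hx.2
    apply intervalIntegral.integral_eq_sub_of_hasDerivAt
    · intro z hz
      rw [← hRes2 z (hsub hz)]
      exact (((hVnd z).hasDerivAt.const_mul sn).sub
        (hmid z).hasDerivAt).add ((hVn'd z).hasDerivAt.const_mul ε)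
    · exact (hg.mono hsub).intervalIntegrable
  -- the sup defining K
  have hbdd : BddAbove ((fun p : ℝ × ℝ =>
      Real.sqrt (((s + χ * p.2) / D)^2 + ((χ * p.1) / D)^2 + (1 / ε)^2
        + ((-s + 2 * ε * p.2) / ε)^2)) ''
      (Set.Icc (2 * up - um) (2 * um - up) ×ˢ Set.Icc (2 * vm - vp) (2 * vp - vm))) := by
    apply IsCompact.bddAbove
    apply (isCompact_Icc.prod isCompact_Icc).image
    exact Real.continuous_sqrt.comp (by fun_prop)
  have hKmem : ∀ u v : ℝ, 2 * up - um ≤ u → u ≤ 2 * um - up → 2 * vm - vp ≤ v →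
      v ≤ 2 * vp - vm →
      Real.sqrt (((s + χ * v) / D)^2 + ((χ * u) / D)^2 + (1 / ε)^2
        + ((-s + 2 * ε * v) / ε)^2) ≤ K := by
    intro u v h1 h2 h3 h4
    rw [hK]
    exact le_csSup hbdd ⟨(u, v), Set.mem_prod.2 ⟨Set.mem_Icc.2 ⟨h1, h2⟩,
      Set.mem_Icc.2 ⟨h3, h4⟩⟩, rfl⟩
  have hKpos : 0 < K := by
    have h1 : (1:ℝ)/ε ≤ Real.sqrt (((s + χ * (2*vm-vp)) / D)^2 + ((χ * (2*up-um)) / D)^2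
        + (1 / ε)^2 + ((-s + 2 * ε * (2*vm-vp)) / ε)^2) := by
      have h0 : ((1:ℝ)/ε)^2 ≤ ((s + χ * (2*vm-vp)) / D)^2 + ((χ * (2*up-um)) / D)^2
          + (1 / ε)^2 + ((-s + 2 * ε * (2*vm-vp)) / ε)^2 := by
        nlinarith [sq_nonneg ((s + χ * (2*vm-vp)) / D), sq_nonneg ((χ * (2*up-um)) / D), sq_nonneg ((-s + 2 * ε * (2*vm-vp)) / ε)]
      have h0' := Real.sqrt_le_sqrt h0
      rwa [Real.sqrt_sq (by positivity)] at h0'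
    have h2 := hKmem (2*up-um) (2*vm-vp) le_rfl (by linarith) le_rfl (by linarith)
    have : (0:ℝ) < 1/ε := by positivity
    linarith
  -- the error vector
  set w : ℝ → EuclideanSpace ℝ (Fin 2) :=
    fun t => ksE2 ![U t - Un t, V t - Vn t] with hw
  set w' : ℝ → EuclideanSpace ℝ (Fin 2) :=
    fun t => ksE2 ![deriv U t - deriv Un t, deriv V t - deriv Vn t] with hw'
  have hwd : ∀ t, HasDerivAt w (w' t) t := fun t =>
    ksE2_hasDerivAt (((hUd t).hasDerivAt).sub ((hUnd t).hasDerivAt))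
      (((hVd t).hasDerivAt).sub ((hVnd t).hasDerivAt))
  have hwnorm : ∀ t, ‖w t‖ = Real.sqrt ((U t - Un t)^2 + (V t - Vn t)^2) :=
    fun t => ksE2_norm _ _
  have hw'norm : ∀ t, ‖w' t‖
      = Real.sqrt ((deriv U t - deriv Un t)^2 + (deriv V t - deriv Vn t)^2) :=
    fun t => ksE2_norm _ _
  intro x₀ hx₀
  obtain ⟨hx₀l, hx₀r⟩ := hx₀
  set et : ℝ := Real.sqrt ((eps1 x₀)^2 + (eps2 x₀)^2) with het
  -- monotonicity of eps1, eps2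
  have hmemb : (-a) ∈ Set.Icc (-a) a := ⟨le_rfl, by linarith⟩
  have hsubx : Set.uIcc (-a) x₀ ⊆ Set.Icc (-a) a := by
    rw [Set.uIcc_of_le hx₀l]; exact Set.Icc_subset_Icc le_rfl hx₀r
  have heps1mono : ∀ z, -a ≤ z → z ≤ x₀ → eps1 z ≤ eps1 x₀ := by
    intro z h1 h2
    rw [heps1 z, heps1 x₀]
    gcongr
    apply intervalIntegral.integral_mono_interval le_rfl h1 h2
    · exact Filter.Eventually.of_forall fun t => abs_nonneg _
    · exact ((hf.mono hsubx).abs).intervalIntegrable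
  have heps2mono : ∀ z, -a ≤ z → z ≤ x₀ → eps2 z ≤ eps2 x₀ := by
    intro z h1 h2
    rw [heps2 z, heps2 x₀]
    gcongr
    apply intervalIntegral.integral_mono_interval le_rfl h1 h2
    · exact Filter.Eventually.of_forall fun t => abs_nonneg _
    · exact ((hg.mono hsubx).abs).intervalIntegrable
  -- the Gronwall bound hypothesis
  have bound : ∀ z ∈ Set.Ico (-a) x₀, ‖w' z‖ ≤ K * ‖w z‖ + et := by
    intro z hz
    have hz1 : -a ≤ z := hz.1
    have hz2 : z ≤ a := le_trans hz.2.le hx₀r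
    have hzI : z ∈ Set.Icc (-a) a := ⟨hz1, hz2⟩
    have key1 := hFTC1 z hzI
    have key2 := hFTC2 z hzI
    have hex1 := hexU z
    have hex2 := hexV z
    -- decompositions
    have hd1 : deriv U z - deriv Un z
        = (-((s + χ*((V z + Vn z)/2))/D))*(U z - Un z)
          + (-(χ*((U z + Un z)/2)/D))*(V z - Vn z)
          + ((deriv U (-a) - deriv Un (-a)) + (s*(U (-a) - Un (-a))
              + (s-sn)*(Un (-a) - Un z)
              + χ*(V (-a)*(U (-a) - Un (-a)) + Un (-a)*(V (-a) - Vn (-a)))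
              - ∫ t in (-a)..z, f t)/D) := by
      field_simp
      linear_combination 2*(hex1 + key1)
    have hd2 : deriv V z - deriv Vn z
        = (-(1/ε))*(U z - Un z) + ((-s + 2*ε*((V z + Vn z)/2))/ε)*(V z - Vn z)
          + ((deriv V (-a) - deriv Vn (-a)) + (s*(V (-a) - Vn (-a))
              + (s-sn)*(Vn (-a) - Vn z)
              - ε*((V (-a) + Vn (-a))*(V (-a) - Vn (-a)))
              + (U (-a) - Un (-a)) - ∫ t in (-a)..z, g t)/ε) := by
      field_simp
      linear_combination hex2 + key2
    -- boundary and pointwise bounds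
    have hUb := hUbd (-a)
    have hVb := hVbd (-a)
    have hUnb := hUnbd (-a) hmemb
    have hVnb := hVnbd (-a) hmemb
    have hUz := hUbd z
    have hVz := hVbd z
    have hUnz := hUnbd z hzI
    have hVnz := hVnbd z hzI
    have aVb : |V (-a)| ≤ -vm := abs_le.2 ⟨by linarith [hVb.1], by linarith [hVb.2]⟩
    have aUnb : |Un (-a)| ≤ 2*um - up := abs_le.2 ⟨by linarith [hUnb.1], hUnb.2⟩
    have aUnbz : |Un (-a) - Un z| ≤ 3*um - up :=
      abs_le.2 ⟨by linarith [hUnb.1, hUnz.2], by linarith [hUnb.2, hUnz.1]⟩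
    have aVbVnb : |V (-a) + Vn (-a)| ≤ vp - 3*vm :=
      abs_le.2 ⟨by linarith [hVb.1, hVnb.1], by linarith [hVb.2, hVnb.2]⟩
    have aVnbz : |Vn (-a) - Vn z| ≤ vp - 3*vm :=
      abs_le.2 ⟨by linarith [hVnb.1, hVnz.2], by linarith [hVnb.2, hVnz.1]⟩
    have hsubz : Set.uIcc (-a) z ⊆ Set.Icc (-a) a := by
      rw [Set.uIcc_of_le hz1]; exact Set.Icc_subset_Icc le_rfl hz2
    have aI1 : |∫ t in (-a)..z, f t| ≤ ∫ t in (-a)..z, |f t| :=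
      intervalIntegral.abs_integral_le_integral_abs hz1
    have aI2 : |∫ t in (-a)..z, g t| ≤ ∫ t in (-a)..z, |g t| :=
      intervalIntegral.abs_integral_le_integral_abs hz1
    -- |R1| ≤ eps1 z
    have hR1b : |(deriv U (-a) - deriv Un (-a)) + (s*(U (-a) - Un (-a))
          + (s-sn)*(Un (-a) - Un z)
          + χ*(V (-a)*(U (-a) - Un (-a)) + Un (-a)*(V (-a) - Vn (-a)))
          - ∫ t in (-a)..z, f t)/D| ≤ eps1 z := by
      rw [heps1 z]
      have hT : |s*(U (-a) - Un (-a)) + (s-sn)*(Un (-a) - Un z)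
            + χ*(V (-a)*(U (-a) - Un (-a)) + Un (-a)*(V (-a) - Vn (-a)))
            - ∫ t in (-a)..z, f t|
          ≤ |s| * |U (-a) - Un (-a)| + |s-sn| * (3*um-up)
            + χ*((-vm) * |U (-a) - Un (-a)| + (2*um-up) * |V (-a) - Vn (-a)|)
            + ∫ t in (-a)..z, |f t| := by
        calc _ ≤ |s*(U (-a) - Un (-a))| + |(s-sn)*(Un (-a) - Un z)|
              + |χ*(V (-a)*(U (-a) - Un (-a)) + Un (-a)*(V (-a) - Vn (-a)))|
              + |∫ t in (-a)..z, f t| := ks_abs4 _ _ _ _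
          _ ≤ _ := by
            have hinner : |V (-a)*(U (-a) - Un (-a)) + Un (-a)*(V (-a) - Vn (-a))|
                ≤ (-vm) * |U (-a) - Un (-a)| + (2*um-up) * |V (-a) - Vn (-a)| := by
              refine (abs_add_le _ _).trans ?_
              rw [abs_mul, abs_mul]
              gcongr
            rw [abs_mul, abs_mul, abs_mul χ, abs_of_pos hχ]
            gcongr
      calc |(deriv U (-a) - deriv Un (-a)) + (s*(U (-a) - Un (-a))
            + (s-sn)*(Un (-a) - Un z)
            + χ*(V (-a)*(U (-a) - Un (-a)) + Un (-a)*(V (-a) - Vn (-a)))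
            - ∫ t in (-a)..z, f t)/D|
          ≤ |deriv U (-a) - deriv Un (-a)| + |s*(U (-a) - Un (-a))
            + (s-sn)*(Un (-a) - Un z)
            + χ*(V (-a)*(U (-a) - Un (-a)) + Un (-a)*(V (-a) - Vn (-a)))
            - ∫ t in (-a)..z, f t|/D := by
            refine (abs_add_le _ _).trans ?_
            rw [abs_div, abs_of_pos hD]
        _ ≤ |deriv U (-a) - deriv Un (-a)| + (|s| * |U (-a) - Un (-a)| + |s-sn| * (3*um-up)
            + χ*((-vm) * |U (-a) - Un (-a)| + (2*um-up) * |V (-a) - Vn (-a)|)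
            + ∫ t in (-a)..z, |f t|)/D := by gcongr
        _ = _ := by rw [abs_of_nonpos hvm0.le]; ring
    -- |R2| ≤ eps2 z
    have hR2b : |(deriv V (-a) - deriv Vn (-a)) + (s*(V (-a) - Vn (-a))
          + (s-sn)*(Vn (-a) - Vn z)
          - ε*((V (-a) + Vn (-a))*(V (-a) - Vn (-a)))
          + (U (-a) - Un (-a)) - ∫ t in (-a)..z, g t)/ε| ≤ eps2 z := by
      rw [heps2 z]
      have hT : |s*(V (-a) - Vn (-a)) + (s-sn)*(Vn (-a) - Vn z)
            - ε*((V (-a) + Vn (-a))*(V (-a) - Vn (-a)))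
            + (U (-a) - Un (-a)) - ∫ t in (-a)..z, g t|
          ≤ |s| * |V (-a) - Vn (-a)| + |s-sn| * (vp-3*vm)
            + ε*((vp-3*vm) * |V (-a) - Vn (-a)|)
            + |U (-a) - Un (-a)| + ∫ t in (-a)..z, |g t| := by
        calc _ ≤ |s*(V (-a) - Vn (-a))| + |(s-sn)*(Vn (-a) - Vn z)|
              + |ε*((V (-a) + Vn (-a))*(V (-a) - Vn (-a)))|
              + |U (-a) - Un (-a)| + |∫ t in (-a)..z, g t| := ks_abs5 _ _ _ _ _
          _ ≤ _ := by
            rw [abs_mul, abs_mul, abs_mul ε, abs_of_pos hε, abs_mul]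
            gcongr
      calc |(deriv V (-a) - deriv Vn (-a)) + (s*(V (-a) - Vn (-a))
            + (s-sn)*(Vn (-a) - Vn z)
            - ε*((V (-a) + Vn (-a))*(V (-a) - Vn (-a)))
            + (U (-a) - Un (-a)) - ∫ t in (-a)..z, g t)/ε|
          ≤ |deriv V (-a) - deriv Vn (-a)| + |s*(V (-a) - Vn (-a))
            + (s-sn)*(Vn (-a) - Vn z)
            - ε*((V (-a) + Vn (-a))*(V (-a) - Vn (-a)))
            + (U (-a) - Un (-a)) - ∫ t in (-a)..z, g t|/ε := by
            refine (abs_add_le _ _).trans ?_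
            rw [abs_div, abs_of_pos hε]
        _ ≤ |deriv V (-a) - deriv Vn (-a)| + (|s| * |V (-a) - Vn (-a)| + |s-sn| * (vp-3*vm)
            + ε*((vp-3*vm) * |V (-a) - Vn (-a)|)
            + |U (-a) - Un (-a)| + ∫ t in (-a)..z, |g t|)/ε := by gcongr
        _ = _ := by field_simp; ring
    -- matrix norm bound
    have hKle : Real.sqrt ((-((s + χ*((V z + Vn z)/2))/D))^2 + (-(χ*((U z + Un z)/2)/D))^2
        + (-(1/ε))^2 + ((-s + 2*ε*((V z + Vn z)/2))/ε)^2) ≤ K := by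
      have heq : (-((s + χ*((V z + Vn z)/2))/D))^2 + (-(χ*((U z + Un z)/2)/D))^2
          + (-(1/ε))^2 + ((-s + 2*ε*((V z + Vn z)/2))/ε)^2
          = ((s + χ * ((V z + Vn z)/2)) / D)^2 + ((χ * ((U z + Un z)/2)) / D)^2
            + (1 / ε)^2 + ((-s + 2 * ε * ((V z + Vn z)/2)) / ε)^2 := by ring
      rw [heq]
      exact hKmem _ _ (by linarith [hUz.1, hUnz.1]) (by linarith [hUz.2, hUnz.2])
        (by linarith [hVz.1, hVnz.1]) (by linarith [hVz.2, hVnz.2])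
    rw [hw'norm z, hwnorm z, hd1, hd2]
    exact ks_key_ineq _ _ _ _ _ _ _ _ K (eps1 x₀) (eps2 x₀) hKle
      (hR1b.trans (heps1mono z hz1 hz.2.le)) (hR2b.trans (heps2mono z hz1 hz.2.le))
  -- apply Gronwall's inequality
  have hwdiff : Differentiable ℝ w := fun t => (hwd t).differentiableAt
  have hcont : ContinuousOn w (Set.Icc (-a) x₀) := hwdiff.continuous.continuousOn
  have hderivW : ∀ t ∈ Set.Ico (-a) x₀, HasDerivWithinAt w (w' t) (Set.Ici t) t :=
    fun t _ => (hwd t).hasDerivWithinAt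
  have hδ : ‖w (-a)‖ ≤ E (-a) := by rw [hE, hwnorm]
  have hgr := norm_le_gronwallBound_of_norm_deriv_right_le hcont hderivW hδ bound x₀
    ⟨hx₀l, le_rfl⟩
  rw [gronwallBound_of_K_ne_0 hKpos.ne'] at hgr
  have hEx : E x₀ = ‖w x₀‖ := by rw [hE, hwnorm]
  have habsx : |x₀ + a| = x₀ + a := abs_of_nonneg (by linarith)
  rw [hEx, habsx]
  calc ‖w x₀‖ ≤ E (-a) * Real.exp (K * (x₀ - -a))
        + et / K * (Real.exp (K * (x₀ - -a)) - 1) := hgr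
    _ = (E (-a) + et / K) * Real.exp (K * (x₀ + a)) - et / K := by
        rw [sub_neg_eq_add]; ring
end

section
/- Let τ ≥ 0, α ∈ [1/2, 1), h(u) = u(1−u)(u−α). Let (U, V) be a C¹ solution on ℝ of the Allen–Cahn-with-relaxation traveling-wave system with speed s, and (Uⁿ, Vⁿ) a C¹ solution on ℝ of the same system with speed sⁿ, where τ s² < 1 and τ (sⁿ)² < 1, and suppose 0 ≤ U, Uⁿ ≤ 1 and 0 ≤ V, Vⁿ ≤ 1 on ℝ. Set E(x) = √((U − Uⁿ)²(x) + (V − Vⁿ)²(x)) and define ε₁ = |1/(1−τs²) − 1/(1−τ(sⁿ)²)| + |τs/(1−τs²) − τsⁿ/(1−τ(sⁿ)²)|, ε₂ = |s/(1−τs²) − sⁿ/(1−τ(sⁿ)²)| + |1/(1−τs²) − 1/(1−τ(sⁿ)²)|, and K = (1/(1−τs²))·√((τsα)² + α² + s² + 1). Then for every a > 0 and every x ≥ −a, E(x) ≤ (E(−a) + √(ε₁² + ε₂²)/K)·exp(K|x + a|) − √(ε₁² + ε₂²)/K. -/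
set_option maxHeartbeats 1000000

open Filter Topology

/-- The bistable nonlinearity `h(u) = u(1−u)(u−α)`. -/
def acNonlinearity (α u : ℝ) : ℝ := u * (1 - u) * (u - α)

lemma cs2 (a b x y : ℝ) : (a*x + b*y)^2 ≤ (a^2+b^2)*(x^2+y^2) := by
  nlinarith [sq_nonneg (a*y - b*x)]

lemma l2_tri (a b c d : ℝ) :
    Real.sqrt ((a+c)^2+(b+d)^2) ≤ Real.sqrt (a^2+b^2) + Real.sqrt (c^2+d^2) := by
  have h4 : (a*c+b*d)^2 ≤ (a^2+b^2)*(c^2+d^2) := by nlinarith [sq_nonneg (a*d-b*c)]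
  have h1 : a*c + b*d ≤ Real.sqrt (a^2+b^2) * Real.sqrt (c^2+d^2) := by
    calc a*c+b*d ≤ |a*c+b*d| := le_abs_self _
      _ = Real.sqrt ((a*c+b*d)^2) := (Real.sqrt_sq_eq_abs _).symm
      _ ≤ Real.sqrt ((a^2+b^2)*(c^2+d^2)) := Real.sqrt_le_sqrt h4
      _ = _ := Real.sqrt_mul (by positivity) _
  have h2 : (a+c)^2+(b+d)^2 ≤ (Real.sqrt (a^2+b^2) + Real.sqrt (c^2+d^2))^2 := by
    have e1 : Real.sqrt (a^2+b^2) ^ 2 = a^2+b^2 := Real.sq_sqrt (by positivity)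
    have e2 : Real.sqrt (c^2+d^2) ^ 2 = c^2+d^2 := Real.sq_sqrt (by positivity)
    nlinarith [e1, e2, h1]
  calc Real.sqrt ((a+c)^2+(b+d)^2)
      ≤ Real.sqrt ((Real.sqrt (a^2+b^2) + Real.sqrt (c^2+d^2))^2) := Real.sqrt_le_sqrt h2
    _ = _ := Real.sqrt_sq (by positivity)

lemma enorm2 (a b : ℝ) :
    ‖(EuclideanSpace.equiv (Fin 2) ℝ).symm ![a, b]‖ = Real.sqrt (a^2 + b^2) := by
  rw [EuclideanSpace.norm_eq]
  simp [Fin.sum_univ_two, sq_abs]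

lemma hasDerivAt_e2 {g1 g2 : ℝ → ℝ} {d1 d2 : ℝ} {x : ℝ}
    (h1 : HasDerivAt g1 d1 x) (h2 : HasDerivAt g2 d2 x) :
    HasDerivAt (fun t => (EuclideanSpace.equiv (Fin 2) ℝ).symm ![g1 t, g2 t])
      ((EuclideanSpace.equiv (Fin 2) ℝ).symm ![d1, d2]) x := by
  have hp : HasDerivAt (fun z => (![g1 z, g2 z] : Fin 2 → ℝ)) ![d1, d2] x := by
    rw [hasDerivAt_pi]
    intro i
    fin_cases i
    · simpa using h1
    · simpa using h2
  exact ((EuclideanSpace.equiv (Fin 2) ℝ).symm.toContinuousLinearMap.hasFDerivAt.comp_hasDerivAt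
    x hp)

lemma ac_lip {α : ℝ} (hα : 1/2 ≤ α) (hα' : α < 1) {u v : ℝ}
    (hu : 0 ≤ u) (hu1 : u ≤ 1) (hv : 0 ≤ v) (hv1 : v ≤ 1) :
    |acNonlinearity α u - acNonlinearity α v| ≤ α * |u - v| := by
  have hq : acNonlinearity α u - acNonlinearity α v
      = (u - v) * (-(u^2+u*v+v^2) + (1+α)*(u+v) - α) := by
    unfold acNonlinearity; ring
  have h1 : |(-(u^2+u*v+v^2) + (1+α)*(u+v) - α)| ≤ α := by
    rw [abs_le]
    constructor
    · nlinarith [mul_nonneg (sub_nonneg.2 hu1) hv, mul_nonneg (sub_nonneg.2 hv1) hu,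
        mul_nonneg hu (sub_nonneg.2 hu1), mul_nonneg hv (sub_nonneg.2 hv1)]
    · nlinarith [sq_nonneg (u + v - 2*(1+α)/3), sq_nonneg (u - v),
        mul_nonneg (by linarith : (0:ℝ) ≤ α) (by linarith : (0:ℝ) ≤ 1 - α)]
  calc |acNonlinearity α u - acNonlinearity α v|
      = |u - v| * |(-(u^2+u*v+v^2) + (1+α)*(u+v) - α)| := by rw [hq, abs_mul]
    _ ≤ |u - v| * α := mul_le_mul_of_nonneg_left h1 (abs_nonneg _)
    _ = α * |u - v| := mul_comm _ _

lemma ac_bd {α u : ℝ} (hα : 0 ≤ α) (hα' : α ≤ 1) (hu : 0 ≤ u) (hu1 : u ≤ 1) :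
    |acNonlinearity α u| ≤ 1 := by
  rw [abs_le]; unfold acNonlinearity
  constructor <;>
    nlinarith [mul_nonneg hu (sub_nonneg.2 hu1), mul_nonneg hu hα,
      mul_nonneg (sub_nonneg.2 hu1) (sub_nonneg.2 hα')]

/-- quantitative comparison between two traveling-wave solutions of the
Allen--Cahn model with relaxation, with speeds `s` and `sⁿ` respectively. -/
theorem allen_cahn_relaxation_error_estimate
    (τ α s sn : ℝ) (hτ : 0 ≤ τ) (hα : 1/2 ≤ α) (hα' : α < 1)
    (hs : τ * s^2 < 1) (hsn : τ * sn^2 < 1)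
    (U V : ℝ → ℝ) (hU : ContDiff ℝ 1 U) (hV : ContDiff ℝ 1 V)
    (hODE1 : ∀ z, s * deriv U z + deriv V z + acNonlinearity α (U z) = 0)
    (hODE2 : ∀ z, deriv U z + τ * s * deriv V z - V z = 0)
    (Un Vn : ℝ → ℝ) (hUn : ContDiff ℝ 1 Un) (hVn : ContDiff ℝ 1 Vn)
    (hODE1n : ∀ z, sn * deriv Un z + deriv Vn z + acNonlinearity α (Un z) = 0)
    (hODE2n : ∀ z, deriv Un z + τ * sn * deriv Vn z - Vn z = 0)
    (hUbd : ∀ z, 0 ≤ U z ∧ U z ≤ 1) (hVbd : ∀ z, 0 ≤ V z ∧ V z ≤ 1)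
    (hUnbd : ∀ z, 0 ≤ Un z ∧ Un z ≤ 1) (hVnbd : ∀ z, 0 ≤ Vn z ∧ Vn z ≤ 1)
    (E : ℝ → ℝ) (eps1 eps2 K : ℝ)
    (hE : ∀ x, E x = Real.sqrt ((U x - Un x)^2 + (V x - Vn x)^2))
    (heps1 : eps1 = |1 / (1 - τ * s^2) - 1 / (1 - τ * sn^2)|
      + |τ * s / (1 - τ * s^2) - τ * sn / (1 - τ * sn^2)|)
    (heps2 : eps2 = |s / (1 - τ * s^2) - sn / (1 - τ * sn^2)|
      + |1 / (1 - τ * s^2) - 1 / (1 - τ * sn^2)|)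
    (hK : K = (1 / (1 - τ * s^2)) * Real.sqrt ((τ * s * α)^2 + α^2 + s^2 + 1)) :
    ∀ a > (0:ℝ), ∀ x ≥ -a,
      E x ≤ (E (-a) + Real.sqrt (eps1^2 + eps2^2) / K) * Real.exp (K * |x + a|)
        - Real.sqrt (eps1^2 + eps2^2) / K := by
  intro a ha x hx
  have hden : (0:ℝ) < 1 - τ * s^2 := by linarith
  have hdenn : (0:ℝ) < 1 - τ * sn^2 := by linarith
  set β : ℝ := (1 - τ * s^2)⁻¹ with hβ
  set βn : ℝ := (1 - τ * sn^2)⁻¹ with hβn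
  have hβpos : 0 < β := inv_pos.2 hden
  have hβnpos : 0 < βn := inv_pos.2 hdenn
  set γ : ℝ := τ * s * β with hγ
  set γn : ℝ := τ * sn * βn with hγn
  set σ : ℝ := s * β with hσ
  set σn : ℝ := sn * βn with hσn
  set M : ℝ := (τ * s * α)^2 + α^2 + s^2 + 1 with hM
  have hMpos : 0 < M := by positivity
  have hK' : K = β * Real.sqrt M := by rw [hK, one_div]
  have hKpos : 0 < K := by
    rw [hK']; exact mul_pos hβpos (Real.sqrt_pos.2 hMpos)
  have hK2 : K^2 = β^2 * M := by
    rw [hK', mul_pow, Real.sq_sqrt hMpos.le]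
  have heps1' : eps1 = |β - βn| + |γ - γn| := by
    rw [heps1]; simp only [one_div, div_eq_mul_inv, hβ, hβn, hγ, hγn, one_mul]
  have heps2' : eps2 = |σ - σn| + |β - βn| := by
    rw [heps2]; simp only [one_div, div_eq_mul_inv, hβ, hβn, hσ, hσn, one_mul]
  have heps1nn : 0 ≤ eps1 := by rw [heps1']; positivity
  have heps2nn : 0 ≤ eps2 := by rw [heps2']; positivity
  set ε : ℝ := Real.sqrt (eps1^2 + eps2^2) with hε
  -- derivative formulas
  have hU' : ∀ z, deriv U z = β * (V z + τ * s * acNonlinearity α (U z)) := by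
    intro z
    rw [hβ, eq_comm, inv_mul_eq_iff_eq_mul₀ (ne_of_gt hden)]
    linear_combination τ * s * hODE1 z - hODE2 z
  have hV' : ∀ z, deriv V z = β * (-(s * V z + acNonlinearity α (U z))) := by
    intro z
    rw [hβ, eq_comm, inv_mul_eq_iff_eq_mul₀ (ne_of_gt hden)]
    linear_combination s * hODE2 z - hODE1 z
  have hUn' : ∀ z, deriv Un z = βn * (Vn z + τ * sn * acNonlinearity α (Un z)) := by
    intro z
    rw [hβn, eq_comm, inv_mul_eq_iff_eq_mul₀ (ne_of_gt hdenn)]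
    linear_combination τ * sn * hODE1n z - hODE2n z
  have hVn' : ∀ z, deriv Vn z = βn * (-(sn * Vn z + acNonlinearity α (Un z))) := by
    intro z
    rw [hβn, eq_comm, inv_mul_eq_iff_eq_mul₀ (ne_of_gt hdenn)]
    linear_combination sn * hODE2n z - hODE1n z
  -- the vector-valued error function
  set f : ℝ → EuclideanSpace ℝ (Fin 2) :=
    fun t => (EuclideanSpace.equiv (Fin 2) ℝ).symm ![U t - Un t, V t - Vn t] with hf
  set f' : ℝ → EuclideanSpace ℝ (Fin 2) :=
    fun t => (EuclideanSpace.equiv (Fin 2) ℝ).symm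
      ![deriv U t - deriv Un t, deriv V t - deriv Vn t] with hf'
  have hUd : ∀ t, HasDerivAt U (deriv U t) t :=
    fun t => (hU.differentiable one_ne_zero t).hasDerivAt
  have hVd : ∀ t, HasDerivAt V (deriv V t) t :=
    fun t => (hV.differentiable one_ne_zero t).hasDerivAt
  have hUnd : ∀ t, HasDerivAt Un (deriv Un t) t :=
    fun t => (hUn.differentiable one_ne_zero t).hasDerivAt
  have hVnd : ∀ t, HasDerivAt Vn (deriv Vn t) t :=
    fun t => (hVn.differentiable one_ne_zero t).hasDerivAt
  have hD : ∀ t, HasDerivAt f (f' t) t := by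
    intro t
    exact hasDerivAt_e2 ((hUd t).sub (hUnd t)) ((hVd t).sub (hVnd t))
  have hfc : Continuous f := by
    rw [continuous_iff_continuousAt]; exact fun t => (hD t).continuousAt
  have hnf : ∀ t, ‖f t‖ = Real.sqrt ((U t - Un t)^2 + (V t - Vn t)^2) := by
    intro t; rw [hf]; exact enorm2 _ _
  have hnf' : ∀ t, ‖f' t‖
      = Real.sqrt ((deriv U t - deriv Un t)^2 + (deriv V t - deriv Vn t)^2) := by
    intro t; rw [hf']; exact enorm2 _ _
  -- the key pointwise bound
  have bound : ∀ z : ℝ, ‖f' z‖ ≤ K * ‖f z‖ + ε := by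
    intro z
    have hα0 : (0:ℝ) ≤ α := by linarith
    obtain ⟨hu0, hu1⟩ := hUbd z
    obtain ⟨hv0, hv1⟩ := hVbd z
    obtain ⟨hun0, hun1⟩ := hUnbd z
    obtain ⟨hvn0, hvn1⟩ := hVnbd z
    set e1 : ℝ := U z - Un z with he1
    set e2 : ℝ := V z - Vn z with he2
    set d : ℝ := acNonlinearity α (U z) - acNonlinearity α (Un z) with hd
    set hn : ℝ := acNonlinearity α (Un z) with hhn
    set vn : ℝ := Vn z with hvn
    have hdle : |d| ≤ α * |e1| := ac_lip hα hα' hu0 hu1 hun0 hun1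
    have hhnle : |hn| ≤ 1 := ac_bd hα0 hα'.le hun0 hun1
    have hvnle : |vn| ≤ 1 := by rw [abs_le]; constructor <;> [linarith; linarith]
    set A1 : ℝ := γ * d + β * e2 with hA1
    set A2 : ℝ := -(σ * e2) - β * d with hA2
    set R1 : ℝ := (γ - γn) * hn + (β - βn) * vn with hR1
    set R2 : ℝ := -((σ - σn) * vn) - (β - βn) * hn with hR2
    have hc1 : deriv U z - deriv Un z = A1 + R1 := by
      rw [hU' z, hUn' z, hA1, hR1, hd, hhn, hvn, he2, hγ, hγn]; ring
    have hc2 : deriv V z - deriv Vn z = A2 + R2 := by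
      rw [hV' z, hVn' z, hA2, hR2, hd, hhn, hvn, he2, hσ, hσn]; ring
    -- bound on the linear part
    have hA1sq : A1^2 ≤ (γ^2 * α^2 + β^2) * (e1^2 + e2^2) := by
      have step1 : |A1| ≤ |γ| * α * |e1| + β * |e2| := by
        calc |A1| ≤ |γ * d| + |β * e2| := abs_add_le _ _
          _ = |γ| * |d| + β * |e2| := by
              rw [abs_mul γ d, abs_mul β e2, abs_of_pos hβpos]
          _ ≤ |γ| * (α * |e1|) + β * |e2| := by
              gcongr
          _ = |γ| * α * |e1| + β * |e2| := by ring
      calc A1^2 = |A1|^2 := (sq_abs _).symm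
        _ ≤ (|γ| * α * |e1| + β * |e2|)^2 := by
            apply pow_le_pow_left₀ (abs_nonneg _) step1
        _ ≤ ((|γ| * α)^2 + β^2) * (|e1|^2 + |e2|^2) := cs2 _ _ _ _
        _ = (γ^2 * α^2 + β^2) * (e1^2 + e2^2) := by
            rw [mul_pow, sq_abs, sq_abs, sq_abs]
    have hA2sq : A2^2 ≤ (β^2 * α^2 + σ^2) * (e1^2 + e2^2) := by
      have step1 : |A2| ≤ β * α * |e1| + |σ| * |e2| := by
        have hA2' : A2 = (-(β * d)) + (-(σ * e2)) := by rw [hA2]; ring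
        calc |A2| = |(-(β * d)) + (-(σ * e2))| := by rw [hA2']
          _ ≤ |(-(β * d))| + |(-(σ * e2))| := abs_add_le _ _
          _ = β * |d| + |σ| * |e2| := by
              rw [abs_neg (β * d), abs_neg (σ * e2), abs_mul β d, abs_mul σ e2,
                abs_of_pos hβpos]
          _ ≤ β * (α * |e1|) + |σ| * |e2| := by gcongr
          _ = β * α * |e1| + |σ| * |e2| := by ring
      calc A2^2 = |A2|^2 := (sq_abs _).symm
        _ ≤ (β * α * |e1| + |σ| * |e2|)^2 := by
            apply pow_le_pow_left₀ (abs_nonneg _) step1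
        _ ≤ ((β * α)^2 + |σ|^2) * (|e1|^2 + |e2|^2) := cs2 _ _ _ _
        _ = (β^2 * α^2 + σ^2) * (e1^2 + e2^2) := by
            rw [mul_pow, sq_abs, sq_abs, sq_abs]
    have hAsum : A1^2 + A2^2 ≤ K^2 * (e1^2 + e2^2) := by
      have hKeq : γ^2 * α^2 + β^2 + (β^2 * α^2 + σ^2) = K^2 := by
        rw [hK2, hγ, hσ, hM]; ring
      calc A1^2 + A2^2
          ≤ (γ^2 * α^2 + β^2) * (e1^2 + e2^2) + (β^2 * α^2 + σ^2) * (e1^2 + e2^2) :=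
            add_le_add hA1sq hA2sq
        _ = (γ^2 * α^2 + β^2 + (β^2 * α^2 + σ^2)) * (e1^2 + e2^2) := by ring
        _ = K^2 * (e1^2 + e2^2) := by rw [hKeq]
    have hAle : Real.sqrt (A1^2 + A2^2) ≤ K * Real.sqrt (e1^2 + e2^2) := by
      calc Real.sqrt (A1^2 + A2^2) ≤ Real.sqrt (K^2 * (e1^2 + e2^2)) :=
            Real.sqrt_le_sqrt hAsum
        _ = K * Real.sqrt (e1^2 + e2^2) := by
            rw [Real.sqrt_mul (sq_nonneg K), Real.sqrt_sq hKpos.le]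
    -- bound on the residual part
    have hR1le : |R1| ≤ eps1 := by
      calc |R1| ≤ |(γ - γn) * hn| + |(β - βn) * vn| := abs_add_le _ _
        _ = |γ - γn| * |hn| + |β - βn| * |vn| := by rw [abs_mul, abs_mul]
        _ ≤ |γ - γn| * 1 + |β - βn| * 1 := by gcongr
        _ = eps1 := by rw [heps1']; ring
    have hR2le : |R2| ≤ eps2 := by
      have hR2' : R2 = (-((σ - σn) * vn)) + (-((β - βn) * hn)) := by rw [hR2]; ring
      calc |R2| = |(-((σ - σn) * vn)) + (-((β - βn) * hn))| := by rw [hR2']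
        _ ≤ |(-((σ - σn) * vn))| + |(-((β - βn) * hn))| := abs_add_le _ _
        _ = |σ - σn| * |vn| + |β - βn| * |hn| := by
            rw [abs_neg ((σ - σn) * vn), abs_neg ((β - βn) * hn),
              abs_mul (σ - σn) vn, abs_mul (β - βn) hn]
        _ ≤ |σ - σn| * 1 + |β - βn| * 1 := by gcongr
        _ = eps2 := by rw [heps2']; ring
    have hRle : Real.sqrt (R1^2 + R2^2) ≤ ε := by
      rw [hε]
      apply Real.sqrt_le_sqrt
      have h1 : R1^2 ≤ eps1^2 := by
        rw [← sq_abs R1]; exact pow_le_pow_left₀ (abs_nonneg _) hR1le 2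
      have h2 : R2^2 ≤ eps2^2 := by
        rw [← sq_abs R2]; exact pow_le_pow_left₀ (abs_nonneg _) hR2le 2
      linarith
    calc ‖f' z‖ = Real.sqrt ((A1 + R1)^2 + (A2 + R2)^2) := by
          rw [hnf' z, hc1, hc2]
      _ ≤ Real.sqrt (A1^2 + A2^2) + Real.sqrt (R1^2 + R2^2) := l2_tri _ _ _ _
      _ ≤ K * Real.sqrt (e1^2 + e2^2) + ε := add_le_add hAle hRle
      _ = K * ‖f z‖ + ε := by rw [hnf z]
  -- Grönwall
  have key := norm_le_gronwallBound_of_norm_deriv_right_le (f := f) (f' := f')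
    (a := -a) (b := x) (δ := ‖f (-a)‖) (K := K) (ε := ε)
    hfc.continuousOn (fun y _ => (hD y).hasDerivWithinAt) le_rfl
    (fun y _ => bound y)
  have hxmem : x ∈ Set.Icc (-a) x := Set.right_mem_Icc.2 hx
  have hfin := key x hxmem
  rw [gronwallBound_of_K_ne_0 (ne_of_gt hKpos)] at hfin
  have hEx : E x = ‖f x‖ := by rw [hE x, hnf x]
  have hEa : E (-a) = ‖f (-a)‖ := by rw [hE (-a), hnf (-a)]
  have habs : |x + a| = x + a := abs_of_nonneg (by linarith)
  have hsub : x - -a = x + a := by ring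
  rw [hsub] at hfin
  rw [hEx, hEa, habs]
  calc ‖f x‖ ≤ ‖f (-a)‖ * Real.exp (K * (x + a)) + ε / K * (Real.exp (K * (x + a)) - 1) :=
        hfin
    _ = (‖f (-a)‖ + ε / K) * Real.exp (K * (x + a)) - ε / K := by ring
end
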